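/- arXiv:2505.19711 — 2 statements merged into one kernel-verified Lean document; each statement's English description precedes it below -/
import Mathlib

section
/- Determinantal recovery of the potential: let b : ℕ → ℝ be a potential, T ≥ 2, and let C̄ be the T×T matrix with entries C̄_{ij} := C^T_{T+1−j, T+1−i}, where C^T is the connecting matrix of b. Then for every 1 ≤ n ≤ T−1: Σ_{k=1}^{n} b_k = −det A_n, where A_n is the n×n matrix whose (i,j) entry equals C̄_{i,j} for 1 ≤ j ≤ n−1 and whose (i,n) entry equals C̄_{i,n+1} (i.e., A_n consists of the first n rows of columns 1,…,n−1,n+1 of C̄). -/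
/-- `sol b f t n` is the solution `u^f_{n,t}` of the discrete Schrödinger dynamical system
with potential `b` and boundary control `f`:
`u_{n,t+1} + u_{n,t-1} - u_{n+1,t} - u_{n-1,t} + b_n u_{n,t} = 0` for `n ≥ 1`, `t ≥ 0`,
`u_{n,-1} = u_{n,0} = 0` for `n ≥ 1`, and `u_{0,t} = f_t` for `t ≥ 0`
(the first argument is the time `t`, the second the space variable `n`). -/
noncomputable def sol (b f : ℕ → ℝ) : ℕ → ℕ → ℝ
  | 0, n => if n = 0 then f 0 else 0
  | 1, n => if n = 0 then f 1 else
      sol b f 0 (n + 1) + sol b f 0 (n - 1) - b n * sol b f 0 n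
  | (t + 2), n => if n = 0 then f (t + 2) else
      sol b f (t + 1) (n + 1) + sol b f (t + 1) (n - 1) - b n * sol b f (t + 1) n - sol b f t n

/-- The delta control: `δ_0 = 1`, `δ_t = 0` for `t ≥ 1`. -/
noncomputable def delta : ℕ → ℝ := fun t => if t = 0 then 1 else 0

/-- The response vector of the potential `b`: `r_s = u^δ_{1,s+1}`. -/
noncomputable def resp (b : ℕ → ℝ) (s : ℕ) : ℝ := sol b delta (s + 1) 1

/-- The entries of the connecting matrix: `Cmat r T i j = Σ_{k=0}^{T - max i j} r_{|i-j| + 2k}`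
(`i`, `j` are 1-based indices). -/
noncomputable def Cmat (r : ℕ → ℝ) (T i j : ℕ) : ℝ :=
  ∑ k ∈ Finset.range (T - max i j + 1), r (max i j - min i j + 2 * k)

lemma sol_bdry (b f : ℕ → ℝ) (t : ℕ) : sol b f t 0 = f t := by
  match t with
  | 0 => simp [sol]
  | 1 => simp [sol]
  | t+2 => simp [sol]

lemma sol_rec (b f : ℕ → ℝ) (t n : ℕ) :
    sol b f (t+2) (n+1) = sol b f (t+1) (n+2) + sol b f (t+1) n
      - b (n+1) * sol b f (t+1) (n+1) - sol b f t (n+1) := by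
  simp [sol]

lemma w_speed (b : ℕ → ℝ) : ∀ t n, t < n → sol b delta t n = 0
  | 0, n, h => by
    have : n ≠ 0 := by omega
    simp only [sol, if_neg this]
  | 1, n, h => by
    have h1 : n ≠ 0 := by omega
    simp only [sol, if_neg h1, if_neg (by omega : n + 1 ≠ 0), if_neg (by omega : n - 1 ≠ 0),
      if_neg (by omega : n ≠ 0)]
    ring
  | (t+2), n, h => by
    have h1 : n ≠ 0 := by omega
    simp only [sol, if_neg h1]
    rw [w_speed b (t+1) (n+1) (by omega), w_speed b (t+1) (n-1) (by omega),
      w_speed b (t+1) n (by omega), w_speed b t n (by omega)]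
    ring

lemma w_diag (b : ℕ → ℝ) : ∀ n, sol b delta n n = 1
  | 0 => by norm_num [sol, delta]
  | 1 => by norm_num [sol, delta]
  | (n+2) => by
    have e1 : n+2 = (n+1)+1 := rfl
    rw [e1, sol_rec]
    rw [w_speed b (n+1) (n+1+2) (by omega), w_diag b (n+1),
      w_speed b (n+1) (n+1+1) (by omega), w_speed b n (n+1+1) (by omega)]
    ring

lemma w_sub (b : ℕ → ℝ) : ∀ n, sol b delta (n+1) n = -(∑ k ∈ Finset.Icc 1 n, b k)
  | 0 => by norm_num [sol, delta]
  | (n+1) => by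
    rw [show ((n+1)+1 : ℕ) = n+2 from rfl, sol_rec]
    rw [w_speed b (n+1) (n+2) (by omega), w_sub b n, w_diag b (n+1),
      w_speed b n (n+1) (by omega)]
    rw [Finset.sum_Icc_succ_top (by omega : 1 ≤ n+1)]
    ring

noncomputable def S (b : ℕ → ℝ) (N p q : ℕ) : ℝ :=
  ∑ m ∈ Finset.range N, sol b delta p (m+1) * sol b delta q (m+1)

lemma S_comm (b : ℕ → ℝ) (N p q : ℕ) : S b N p q = S b N q p := by
  unfold S; exact Finset.sum_congr rfl fun m _ => mul_comm _ _

lemma S_mono (b : ℕ → ℝ) {N M p : ℕ} (q : ℕ) (h1 : p ≤ N) (h2 : N ≤ M) :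
    S b M p q = S b N p q := by
  unfold S
  rw [← Finset.sum_subset (Finset.range_subset_range.mpr h2)]
  intro m hm hm'
  rw [w_speed b p (m+1) (by simp at hm hm' ⊢; omega)]
  ring

lemma S_zero (b : ℕ → ℝ) (N q : ℕ) : S b N 0 q = 0 := by
  unfold S
  apply Finset.sum_eq_zero
  intro m _
  rw [w_speed b 0 (m+1) (by omega)]
  ring

lemma S_one (b : ℕ → ℝ) {N : ℕ} (q : ℕ) (hN : 1 ≤ N) : S b N 1 q = sol b delta q 1 := by
  unfold S
  rw [Finset.sum_eq_single 0]
  · rw [w_diag b 1]; ring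
  · intro m _ hm
    rw [w_speed b 1 (m+1) (by omega)]; ring
  · intro h; simp at h; omega

/-- Summation by parts / telescoping identity. -/
lemma telescope (b : ℕ → ℝ) {N p q : ℕ} (hp : 1 ≤ p) (hq : 1 ≤ q) (hpN : p ≤ N) (hqN : q ≤ N) :
    ∑ m ∈ Finset.range N, (sol b delta p (m+2) + sol b delta p m) * sol b delta q (m+1)
      = ∑ m ∈ Finset.range N, sol b delta p (m+1) * (sol b delta q (m+2) + sol b delta q m) := by
  have key : ∀ m, (sol b delta p (m+2) + sol b delta p m) * sol b delta q (m+1)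
      - sol b delta p (m+1) * (sol b delta q (m+2) + sol b delta q m)
      = (sol b delta p (m+2) * sol b delta q (m+1) - sol b delta p (m+1) * sol b delta q (m+2))
        - (sol b delta p (m+1) * sol b delta q m - sol b delta p m * sol b delta q (m+1)) := by
    intro m; ring
  have := Finset.sum_range_sub
    (fun m => sol b delta p (m+1) * sol b delta q m - sol b delta p m * sol b delta q (m+1)) N
  have hsum : ∑ m ∈ Finset.range N,
      ((sol b delta p (m+2) + sol b delta p m) * sol b delta q (m+1)
        - sol b delta p (m+1) * (sol b delta q (m+2) + sol b delta q m)) = 0 := by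
    calc _ = ∑ m ∈ Finset.range N,
        ((fun m => sol b delta p (m+1) * sol b delta q m - sol b delta p m * sol b delta q (m+1)) (m+1)
         - (fun m => sol b delta p (m+1) * sol b delta q m - sol b delta p m * sol b delta q (m+1)) m) := by
          apply Finset.sum_congr rfl; intro m _; simpa using key m
    _ = _ := this
    _ = 0 := by
        rw [w_speed b p (N+1) (by omega), w_speed b q (N+1) (by omega),
          sol_bdry, sol_bdry]
        simp only [delta, if_neg (by omega : p ≠ 0), if_neg (by omega : q ≠ 0)]
        ring
  rw [← sub_eq_zero, ← Finset.sum_sub_distrib]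
  exact hsum

/-- Discrete wave equation for the Gram quantities. -/
lemma S_wave (b : ℕ → ℝ) {N p q : ℕ} (hpN : p + 1 ≤ N) (hqN : q + 1 ≤ N) :
    S b N (p+2) (q+1) + S b N p (q+1) = S b N (p+1) (q+2) + S b N (p+1) q := by
  unfold S
  have lhs : ∀ m : ℕ, sol b delta (p+2) (m+1) * sol b delta (q+1) (m+1)
      + sol b delta p (m+1) * sol b delta (q+1) (m+1)
      = (sol b delta (p+1) (m+2) + sol b delta (p+1) m) * sol b delta (q+1) (m+1)
        - b (m+1) * (sol b delta (p+1) (m+1) * sol b delta (q+1) (m+1)) := by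
    intro m
    rw [sol_rec b delta p m]
    ring
  have rhs : ∀ m : ℕ, sol b delta (p+1) (m+1) * sol b delta (q+2) (m+1)
      + sol b delta (p+1) (m+1) * sol b delta q (m+1)
      = sol b delta (p+1) (m+1) * (sol b delta (q+1) (m+2) + sol b delta (q+1) m)
        - b (m+1) * (sol b delta (p+1) (m+1) * sol b delta (q+1) (m+1)) := by
    intro m
    rw [sol_rec b delta q m]
    ring
  rw [← Finset.sum_add_distrib, ← Finset.sum_add_distrib,
    Finset.sum_congr rfl (fun m _ => lhs m), Finset.sum_congr rfl (fun m _ => rhs m),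
    Finset.sum_sub_distrib, Finset.sum_sub_distrib,
    telescope b (by omega) (by omega) (by omega : p+1 ≤ N) (by omega : q+1 ≤ N)]

/-- The characteristic increment identity. -/
lemma S_K (b : ℕ → ℝ) : ∀ p q N, p + q + 1 ≤ N →
    S b N (p+1) (q+1) - S b N p q = resp b (p+q)
  | 0, q, N, h => by
    rw [S_one b (q+1) (by omega), S_zero]
    simp [resp]
  | (p+1), q, N, h => by
    have wave := S_wave b (p := p) (q := q) (by omega : p+1 ≤ N) (by omega : q+1 ≤ N)
    have ih := S_K b p (q+1) N (by omega)
    have : p + (q+1) = p + 1 + q := by omega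
    rw [this] at ih
    linarith

noncomputable def csum (b : ℕ → ℝ) (p q : ℕ) : ℝ :=
  ∑ k ∈ Finset.range (min p q), resp b (max p q - min p q + 2 * k)

lemma csum_comm (b : ℕ → ℝ) (p q : ℕ) : csum b p q = csum b q p := by
  unfold csum; rw [min_comm, max_comm]

lemma gram (b : ℕ → ℝ) : ∀ p q N, p + q + 2 ≤ N → S b N (p+1) (q+1) = csum b (p+1) (q+1)
  | 0, q, N, h => by
    rw [S_one b (q+1) (by omega)]
    unfold csum
    have : min 1 (q+1) = 1 := by omega
    rw [this]
    have : max 1 (q+1) = q+1 := by omega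
    rw [this]
    simp [resp]
  | (p+1), 0, N, h => by
    rw [S_comm, csum_comm]
    exact gram b 0 (p+1) N (by omega)
  | (p+1), (q+1), N, h => by
    have hK := S_K b (p+1) (q+1) N (by omega)
    have ih := gram b p q N (by omega)
    have hc : csum b (p+2) (q+2) = csum b (p+1) (q+1) + resp b (p+q+2) := by
      unfold csum
      have e : ∀ k : ℕ, max (p+2) (q+2) - min (p+2) (q+2) + 2 * k
          = max (p+1) (q+1) - min (p+1) (q+1) + 2 * k := fun k => by omega
      have h1 : min (p+2) (q+2) = min (p+1) (q+1) + 1 := by omega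
      simp only [e]
      rw [h1, Finset.sum_range_succ,
        show max (p+1) (q+1) - min (p+1) (q+1) + 2 * min (p+1) (q+1) = p+q+2 by omega]
    have harg : p+1+(q+1) = p+q+2 := by omega
    rw [show p+1+1 = p+2 from rfl, show q+1+1 = q+2 from rfl, harg] at hK
    rw [hc, ← ih]
    linarith

lemma gram' (b : ℕ → ℝ) (p q N : ℕ) (hp : 1 ≤ p) (hq : 1 ≤ q) (hN : p + q ≤ N) :
    S b N p q = csum b p q := by
  obtain ⟨p', rfl⟩ : ∃ p', p = p' + 1 := ⟨p - 1, by omega⟩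
  obtain ⟨q', rfl⟩ : ∃ q', q = q' + 1 := ⟨q - 1, by omega⟩
  exact gram b p' q' N (by omega)

lemma Cmat_rot (b : ℕ → ℝ) (T a c : ℕ) (ha1 : 1 ≤ a) (haT : a ≤ T) (hc1 : 1 ≤ c)
    (hcT : c ≤ T) : Cmat (resp b) T (T+1-a) (T+1-c) = csum b a c := by
  unfold Cmat csum
  have h1 : T - max (T+1-a) (T+1-c) + 1 = min a c := by omega
  have h2 : ∀ k : ℕ, max (T+1-a) (T+1-c) - min (T+1-a) (T+1-c) + 2 * k
      = max a c - min a c + 2 * k := fun k => by omega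
  simp only [h2]
  rw [h1]

/-- Determinantal recovery of the potential from the rotated connecting matrix
`C̄_{ij} = C^T_{T+1-j, T+1-i}`: the matrix `A_n` consists of the first `n` rows of the
columns `1, …, n-1, n+1` of `C̄`. -/
theorem determinantal_recovery (b : ℕ → ℝ) (T : ℕ) (hT : 2 ≤ T) :
    ∀ n, 1 ≤ n → n ≤ T - 1 →
      ∑ k ∈ Finset.Icc 1 n, b k =
        -(Matrix.of fun i j : Fin n =>
            Cmat (resp b) T (T + 1 - (if (j : ℕ) + 1 = n then n + 1 else (j : ℕ) + 1))
              (T + 1 - ((i : ℕ) + 1))).det := by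
  intro n hn1 hnT
  set qf : Fin n → ℕ := fun j => if (j : ℕ) + 1 = n then n + 1 else (j : ℕ) + 1 with hqf
  have hq1 : ∀ j : Fin n, 1 ≤ qf j := by
    intro j; simp only [hqf]; split <;> omega
  have hqT : ∀ j : Fin n, qf j ≤ T := by
    intro j; simp only [hqf]; split
    · omega
    · have := j.isLt; omega
  set P : Matrix (Fin n) (Fin n) ℝ :=
    Matrix.of (fun i m : Fin n => sol b delta ((i : ℕ)+1) ((m : ℕ)+1)) with hP
  set Q : Matrix (Fin n) (Fin n) ℝ :=
    Matrix.of (fun m j : Fin n => sol b delta (qf j) ((m : ℕ)+1)) with hQ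
  have hA : (Matrix.of fun i j : Fin n =>
      Cmat (resp b) T (T + 1 - (if (j : ℕ) + 1 = n then n + 1 else (j : ℕ) + 1))
        (T + 1 - ((i : ℕ) + 1))) = P * Q := by
    ext i j
    have hiT : (i : ℕ) + 1 ≤ T := by have := i.isLt; omega
    have step1 : Cmat (resp b) T (T + 1 - qf j) (T + 1 - ((i : ℕ)+1))
        = csum b (qf j) ((i : ℕ)+1) :=
      Cmat_rot b T (qf j) ((i : ℕ)+1) (hq1 j) (hqT j) (by omega) hiT
    have step2 : csum b (qf j) ((i : ℕ)+1) = S b (2*n+2) ((i : ℕ)+1) (qf j) := by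
      rw [csum_comm, ← gram' b ((i : ℕ)+1) (qf j) (2*n+2) (by omega) (hq1 j)
        (by have := i.isLt; have := hqT j; simp only [hqf]; split <;> omega)]
    have step3 : S b (2*n+2) ((i : ℕ)+1) (qf j) = S b n ((i : ℕ)+1) (qf j) :=
      S_mono b (qf j) (by have := i.isLt; omega) (by omega)
    simp only [Matrix.of_apply, hqf] at step1 ⊢
    rw [step1, step2, step3, Matrix.mul_apply]
    unfold S
    rw [Finset.sum_range fun m => sol b delta ((i : ℕ)+1) (m+1) * sol b delta (qf j) (m+1)]
    rfl
  rw [hA, Matrix.det_mul]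
  have hdetP : P.det = 1 := by
    rw [Matrix.det_of_lowerTriangular P (by
      intro i m h
      simp only [OrderDual.toDual_lt_toDual] at h
      exact w_speed b ((i : ℕ)+1) ((m : ℕ)+1) (by exact_mod_cast by omega))]
    apply Finset.prod_eq_one
    intro i _
    exact w_diag b ((i : ℕ)+1)
  have hdetQ : Q.det = -(∑ k ∈ Finset.Icc 1 n, b k) := by
    rw [Matrix.det_of_upperTriangular (by
      intro m j h
      simp only [id_eq] at h
      have hjm : (j : ℕ) < (m : ℕ) := h
      have hne : (j : ℕ) + 1 ≠ n := by have := m.isLt; omega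
      simp only [hQ, Matrix.of_apply, hqf, if_neg hne]
      exact w_speed b ((j : ℕ)+1) ((m : ℕ)+1) (by omega))]
    have hlast : (⟨n-1, by omega⟩ : Fin n) ∈ Finset.univ := Finset.mem_univ _
    rw [Fintype.prod_eq_single (⟨n-1, by omega⟩ : Fin n) (fun m hm => by
      have hmlt : (m : ℕ) < n := m.isLt
      have hne : (m : ℕ) + 1 ≠ n := by
        intro hc
        apply hm
        apply Fin.ext
        simp only []
        omega
      simp only [hQ, Matrix.of_apply, hqf, if_neg hne]
      exact w_diag b ((m : ℕ)+1))]
    have hval : qf ⟨n-1, by omega⟩ = n + 1 := by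
      simp only [hqf]
      rw [if_pos (by omega)]
    simp only [hQ, Matrix.of_apply, hval]
    rw [show (((⟨n-1, by omega⟩ : Fin n) : ℕ)+1) = n by simp; omega]
    exact w_sub b n
  rw [hdetP, hdetQ]
  ring
end

section
/- Gelfand–Levitan equation: let b : ℕ → ℝ be a potential, T ≥ 2, and let W̄ be the T×T matrix defined by W̄_{n,m} := u^{e_{T−m}}_{n,T} (1 ≤ n, m ≤ T), where e_j is the control with (e_j)_t = 1 if t = j and 0 otherwise; W̄ is upper triangular with unit diagonal and hence invertible. Let C̄ be the T×T matrix with entries C̄_{ij} := C^T_{T+1−j, T+1−i}, where C^T is the connecting matrix of b. Then for every β = 1,…,T−1: (W̄^{−1})_{β,T} + Σ_{j=1}^{T−1} (C̄ − I)_{β,j} (W̄^{−1})_{j,T} + (C̄ − I)_{β,T} = 0. -/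
/-- The control which is `1` at time `j` and `0` otherwise. -/
noncomputable def econtrol (j : ℕ) : ℕ → ℝ := fun t => if t = j then 1 else 0

/-- `Wbar b T` is the matrix `W̄_{n,m} = u^{e_{T-m}}_{n,T}` (`n`, `m` are 1-based). -/
noncomputable def Wbar (b : ℕ → ℝ) (T : ℕ) : Matrix (Fin T) (Fin T) ℝ :=
  Matrix.of fun n m => sol b (econtrol (T - ((m : ℕ) + 1))) T ((n : ℕ) + 1)

/-- `CbarM b T` is the rotated connecting matrix `C̄_{ij} = C^T_{T+1-j, T+1-i}`. -/
noncomputable def CbarM (b : ℕ → ℝ) (T : ℕ) : Matrix (Fin T) (Fin T) ℝ :=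
  Matrix.of fun i j => Cmat (resp b) T (T + 1 - ((j : ℕ) + 1)) (T + 1 - ((i : ℕ) + 1))

/-
Write `u = u^δ`. The sums `G(s, t) = Σ_{n ≥ 1} u_{n,s} u_{n,t}` satisfy the discrete wave
equation `G(s+1, t) + G(s-1, t) = G(s, t+1) + G(s, t-1)`: substituting the dynamics, the
potential terms cancel and what remains telescopes to a discrete Wronskian, which vanishes at
`n = 0` (the control `δ` is silent after time `0`) and beyond the light cone. The entries of `C̄`
satisfy the same equation with the same data at `s = 0, 1` (there `G(1, t) = u_{1,t} = r_{t-1}`),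
so `C̄ = W̄ᵀ W̄`. Hence `C̄ W̄⁻¹ = W̄ᵀ`, whose last column vanishes above the diagonal, and the
Gelfand–Levitan equation follows by splitting off the diagonal entry `(W̄⁻¹)_{T,T} = 1`.
-/

open Finset
open scoped Matrix

section Solution

variable (b f : ℕ → ℝ)

theorem sol_boundary (t : ℕ) : sol b f t 0 = f t := by
  rcases t with _ | _ | t <;> simp [sol]

theorem sol_initial {n : ℕ} (hn : n ≠ 0) : sol b f 0 n = 0 := by
  simp [sol, hn]

/-- At `t = 0` the truncated `t - 1` is `0`, and `sol b f 0 n = 0` stands for the initial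
condition `u_{n,-1} = 0`. -/
theorem sol_succ {n : ℕ} (hn : n ≠ 0) (t : ℕ) :
    sol b f (t + 1) n =
      sol b f t (n + 1) + sol b f t (n - 1) - b n * sol b f t n - sol b f (t - 1) n := by
  rcases t with _ | t <;> simp [sol, hn]

theorem sol_eq_zero_of_lt {t n : ℕ} (h : t < n) : sol b f t n = 0 := by
  induction t using Nat.strong_induction_on generalizing n with
  | _ t ih =>
  rcases t with _ | t
  · exact sol_initial b f (by omega)
  · rw [sol_succ b f (by omega), ih t (by omega) (by omega), ih t (by omega) (by omega),
      ih t (by omega) (by omega), ih (t - 1) (by omega) (by omega)]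
    ring

theorem sol_eq_zero_of_control_eq_zero {t n : ℕ} (hf : ∀ s < t, f s = 0) (hn : n ≠ 0) :
    sol b f t n = 0 := by
  induction t using Nat.strong_induction_on generalizing n with
  | _ t ih =>
  have past : ∀ s < t, ∀ m, sol b f s m = 0 := fun s hs m => by
    rcases eq_or_ne m 0 with rfl | hm
    · rw [sol_boundary, hf s hs]
    · exact ih s hs (fun r hr => hf r (hr.trans hs)) hm
  rcases t with _ | t
  · exact sol_initial b f hn
  · simp [sol_succ b f hn, past t (by omega), past (t - 1) (by omega)]

theorem sol_add_of_control_eq_zero {j : ℕ} (hf : ∀ s < j, f s = 0) (t n : ℕ) :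
    sol b f (t + j) n = sol b (fun s => f (s + j)) t n := by
  have start : ∀ n, sol b f j n = sol b (fun s => f (s + j)) 0 n := fun n => by
    rcases eq_or_ne n 0 with rfl | hn
    · simp [sol_boundary]
    · rw [sol_eq_zero_of_control_eq_zero b f hf hn, sol_initial _ _ hn]
  induction t using Nat.twoStepInduction generalizing n with
  | zero => rw [zero_add, start]
  | one =>
    rcases eq_or_ne n 0 with rfl | hn
    · simp [sol_boundary]
    · rw [add_comm, sol_succ b f hn, sol_succ _ _ hn, start, start, start, zero_tsub,
        sol_initial _ _ hn, sol_eq_zero_of_control_eq_zero b f (fun s hs => hf s (by omega)) hn]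
  | more t ih ih' =>
    rcases eq_or_ne n 0 with rfl | hn
    · simp [sol_boundary]
    · rw [show t + 2 + j = t + 1 + j + 1 by ring, sol_succ b f hn, sol_succ _ _ hn,
        ← ih', ← ih', ← ih', show t + 1 + j - 1 = t + j by omega, add_tsub_cancel_right, ih]

theorem sol_delta_self (n : ℕ) : sol b delta (n + 1) (n + 1) = 1 := by
  induction n with
  | zero => simp [sol_succ, sol_initial, sol_boundary, delta]
  | succ n ih =>
    rw [sol_succ b delta n.succ.succ_ne_zero, add_tsub_cancel_right,
      sol_eq_zero_of_lt b delta (show n + 1 < n + 1 + 1 + 1 by omega),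
      sol_eq_zero_of_lt b delta (show n + 1 < n + 1 + 1 by omega),
      sol_eq_zero_of_lt b delta (show n < n + 1 + 1 by omega)]
    simpa using ih

end Solution

theorem sum_range_green {R : Type*} [CommRing R] (v w : ℕ → R) (N : ℕ) :
    ∑ n ∈ range N, ((v (n + 2) + v n) * w (n + 1) - v (n + 1) * (w (n + 2) + w n)) =
      (v (N + 1) * w N - v N * w (N + 1)) - (v 1 * w 0 - v 0 * w 1) := by
  rw [← sum_range_sub (fun n => v (n + 1) * w n - v n * w (n + 1))]
  exact sum_congr rfl fun n _ => by ring

section Gram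

variable (b : ℕ → ℝ)

noncomputable def gram_s15 (N s t : ℕ) : ℝ :=
  ∑ n ∈ range N, sol b delta s (n + 1) * sol b delta t (n + 1)

theorem gram_eq_of_le {N s : ℕ} (hN : s ≤ N) (t : ℕ) : gram_s15 b N s t = gram_s15 b s s t := by
  refine (sum_subset (range_subset_range.2 hN) fun n _ hn => ?_).symm
  rw [sol_eq_zero_of_lt b delta (by simp at hn; omega), zero_mul]

theorem gram_wave {N s t : ℕ} (hs : s ≠ 0) (ht : t ≠ 0) (hsN : s ≤ N) (htN : t ≤ N) :
    gram_s15 b N (s + 1) t + gram_s15 b N (s - 1) t = gram_s15 b N s (t + 1) + gram_s15 b N s (t - 1) := by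
  have dynamics (r n : ℕ) : sol b delta (r + 1) (n + 1) + sol b delta (r - 1) (n + 1) =
      sol b delta r (n + 2) + sol b delta r n - b (n + 1) * sol b delta r (n + 1) := by
    rw [sol_succ b delta (n.add_one_ne_zero), add_tsub_cancel_right]
    ring
  have green := sum_range_green (sol b delta s ·) (sol b delta t ·) N
  simp only [sol_eq_zero_of_lt b delta (show s < N + 1 by omega),
    sol_eq_zero_of_lt b delta (show t < N + 1 by omega), sol_boundary, delta, hs, ht,
    if_false, mul_zero, zero_mul, sub_zero] at green
  rw [← sub_eq_zero, ← green]
  simp only [gram_s15, ← sum_add_distrib, ← sum_sub_distrib]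
  refine sum_congr rfl fun n _ => ?_
  linear_combination sol b delta t (n + 1) * dynamics s n - sol b delta s (n + 1) * dynamics t n

end Gram

section ConnBar

variable (r : ℕ → ℝ)

/-- `C̄_{st} = C^T_{T+1-t, T+1-s}` for `1 ≤ s, t ≤ T`, which does not depend on `T`. -/
noncomputable def connBar (s t : ℕ) : ℝ :=
  ∑ k ∈ range (min s t), r (max s t - min s t + 2 * k)

theorem connBar_zero_left (t : ℕ) : connBar r 0 t = 0 := by
  simp [connBar]

theorem connBar_zero_right (s : ℕ) : connBar r s 0 = 0 := by
  simp [connBar]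

theorem connBar_succ_succ (s t : ℕ) :
    connBar r (s + 1) (t + 1) = connBar r s t + r (s + t) := by
  have hmin : min (s + 1) (t + 1) = min s t + 1 := by omega
  have hdiff : max (s + 1) (t + 1) - min (s + 1) (t + 1) = max s t - min s t := by omega
  rw [connBar, hdiff, hmin, sum_range_succ, connBar]
  congr 2
  omega

end ConnBar

theorem gram_eq_connBar (b : ℕ → ℝ) {N s : ℕ} (hN : s ≤ N) (t : ℕ) :
    gram_s15 b N s t = connBar (resp b) s t := by
  induction s using Nat.twoStepInduction generalizing t N with
  | zero => simp [gram_s15, sol_initial, connBar_zero_left]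
  | one =>
    rw [gram_eq_of_le b hN, gram_s15, sum_range_one, zero_add, sol_delta_self, one_mul]
    rcases t with _ | t
    · rw [sol_initial _ _ one_ne_zero, connBar_zero_right]
    · rw [connBar_succ_succ, connBar_zero_left, zero_add, zero_add, resp]
  | more s ih ih' =>
    rcases t with _ | t
    · simp [gram_s15, sol_initial, connBar_zero_right]
    rw [gram_eq_of_le b hN, ← gram_eq_of_le b (show s + 2 ≤ N + t + 2 by omega)]
    have wave := gram_wave b (N := N + t + 2) (s := s + 1) (t := t + 1) (by omega) (by omega)
      (by omega) (by omega)
    rw [add_tsub_cancel_right, add_tsub_cancel_right, ih' (by omega), ih' (by omega),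
      ih (by omega), connBar_succ_succ] at wave
    rw [connBar_succ_succ, show s + 1 + t = s + (t + 1) by ring]
    linarith

section Matrices

variable (b : ℕ → ℝ) (T : ℕ)

theorem CbarM_apply (i j : Fin T) :
    CbarM b T i j = connBar (resp b) ((i : ℕ) + 1) ((j : ℕ) + 1) := by
  have hi := i.isLt
  have hj := j.isLt
  simp only [CbarM, Cmat, connBar, Matrix.of_apply]
  rw [show T - max (T + 1 - ((j : ℕ) + 1)) (T + 1 - ((i : ℕ) + 1)) + 1 =
      min ((i : ℕ) + 1) ((j : ℕ) + 1) by omega]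
  refine sum_congr rfl fun k _ => ?_
  congr 2
  omega

theorem Wbar_apply (n m : Fin T) :
    Wbar b T n m = sol b delta ((m : ℕ) + 1) ((n : ℕ) + 1) := by
  have hdelay : (fun s => econtrol (T - ((m : ℕ) + 1)) (s + (T - ((m : ℕ) + 1)))) = delta := by
    funext s
    simp [econtrol, delta]
  have hcontrol : ∀ s < T - ((m : ℕ) + 1), econtrol (T - ((m : ℕ) + 1)) s = 0 := fun s hs => by
    simp [econtrol, hs.ne]
  rw [Wbar, Matrix.of_apply, ← hdelay, ← sol_add_of_control_eq_zero b _ hcontrol]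
  congr 1
  omega

theorem Wbar_isUpperTriangular : (Wbar b T).IsUpperTriangular :=
  fun n m h => by
    rw [Wbar_apply]
    exact sol_eq_zero_of_lt b delta (Nat.succ_lt_succ h)

theorem Wbar_apply_self (n : Fin T) : Wbar b T n n = 1 := by
  rw [Wbar_apply, sol_delta_self]

theorem det_Wbar : (Wbar b T).det = 1 := by
  simp [Matrix.det_of_isUpperTriangular (Wbar_isUpperTriangular b T), Wbar_apply_self]

theorem CbarM_eq_transpose_mul_self :
    CbarM b T = (Wbar b T)ᵀ * Wbar b T := by
  ext i j
  rw [CbarM_apply, Matrix.mul_apply, ← gram_eq_connBar b i.isLt, gram_s15,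
    ← Fin.sum_univ_eq_sum_range]
  simp [Wbar_apply]

end Matrices

theorem gelfand_levitan_of_isUpperTriangular {ι R : Type*} [Fintype ι] [LinearOrder ι]
    [CommRing R] {A : Matrix ι ι R} (hA : A.IsUpperTriangular) (hdet : IsUnit A.det) {e : ι}
    (he : ∀ i, i ≤ e) (hAe : A e e = 1) {β : ι} (hβ : β < e) :
    A⁻¹ β e + (∑ j, if j < e then (Aᵀ * A - 1) β j * A⁻¹ j e else 0) + (Aᵀ * A - 1) β e = 0 := by
  have hAB : A * A⁻¹ = 1 := A.mul_nonsing_inv hdet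
  have hBe : A⁻¹ e e = 1 := by
    have h := congr_fun₂ hAB e e
    rwa [Matrix.mul_apply, sum_eq_single e (fun k _ hk => by
      rw [hA (lt_of_le_of_ne (he k) hk), zero_mul]) (by simp), hAe, one_mul,
      Matrix.one_apply_eq] at h
  have hcol : ((Aᵀ * A - 1) * A⁻¹) β e = -A⁻¹ β e := by
    rw [Matrix.sub_mul, Matrix.mul_assoc, hAB, Matrix.mul_one, one_mul, Matrix.sub_apply,
      Matrix.transpose_apply, hA hβ, zero_sub]
  have hsplit : ∀ g : ι → R, ∑ j, g j = (∑ j, if j < e then g j else 0) + g e := fun g => by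
    rw [← sum_filter, ← sum_erase_add _ _ (mem_univ e)]
    congr 2
    ext j
    simp [lt_iff_le_and_ne, he j]
  have := hsplit fun j => (Aᵀ * A - 1) β j * A⁻¹ j e
  rw [← Matrix.mul_apply, hcol, hBe, mul_one] at this
  linear_combination -this

/-- Gelfand–Levitan equation: `W̄` is upper triangular with unit diagonal, hence invertible,
and the last column of `W̄⁻¹` satisfies the Gelfand–Levitan equation with kernel `C̄ - I`. -/
theorem gelfand_levitan (b : ℕ → ℝ) (T : ℕ) (hT : 2 ≤ T) :
    (∀ n m : Fin T, (m : ℕ) < (n : ℕ) → Wbar b T n m = 0) ∧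
    (∀ n : Fin T, Wbar b T n n = 1) ∧
    IsUnit (Wbar b T).det ∧
    (∀ β : Fin T, (β : ℕ) + 1 < T →
      (Wbar b T)⁻¹ β ⟨T - 1, by omega⟩ +
        (∑ j : Fin T, if (j : ℕ) + 1 < T then
          (CbarM b T - 1) β j * (Wbar b T)⁻¹ j ⟨T - 1, by omega⟩ else 0) +
        (CbarM b T - 1) β ⟨T - 1, by omega⟩ = 0) := by
  have hdet : IsUnit (Wbar b T).det := by rw [det_Wbar]; exact isUnit_one
  refine ⟨fun n m h => Wbar_isUpperTriangular b T h, Wbar_apply_self b T, hdet, fun β hβ => ?_⟩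
  have hlast : ∀ j : Fin T, (j : ℕ) + 1 < T ↔ j < ⟨T - 1, by omega⟩ := fun j => by
    change _ ↔ (j : ℕ) < T - 1
    omega
  simp only [hlast, CbarM_eq_transpose_mul_self]
  exact gelfand_levitan_of_isUpperTriangular (Wbar_isUpperTriangular b T) hdet
    (fun i => Fin.le_def.2 (Nat.le_sub_one_of_lt i.isLt)) (Wbar_apply_self b T _) ((hlast β).1 hβ)
end
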